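/- arXiv:1707.06106 — 3 statements merged into one kernel-verified Lean document; each statement's English description precedes it below -/
import Mathlib

section
/- If ψ_i ∈ K (i ∈ ℤ) satisfy (j - i)(ψ_{i+j} - ψ_i - ψ_j) = 0 for all i, j ∈ ℤ and ψ_1 = 0, then ψ_i = 0 for all i ∈ ℤ. -/
/-!
For `i ≠ j` the cocycle identity says `ψ (i + j) = ψ i + ψ j`. Additivity on distinct pairs already
forces full additivity on `ℤ`: the only missing case that matters is `ψ 2 = 2 ψ 1`, which follows by
computing `ψ 5` both as `ψ 1 + ψ 4` and as `ψ 2 + ψ 3`. Hence `ψ i = i ψ 1 = 0`.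
-/

section AddOnDistinct

variable {G : Type*} [AddCommGroup G] {f : ℤ → G}
  (hf : ∀ i j : ℤ, i ≠ j → f (i + j) = f i + f j)
include hf

theorem map_zero_of_map_add_of_ne : f 0 = 0 := by
  simpa using hf 0 1 (by decide)

theorem map_two_of_map_add_of_ne : f 2 = 2 • f 1 := by
  have h3 : f 3 = f 1 + f 2 := hf 1 2 (by decide)
  have h4 : f 4 = f 1 + f 3 := hf 1 3 (by decide)
  have h5 : f 5 = f 1 + f 4 := hf 1 4 (by decide)
  have h5' : f 5 = f 2 + f 3 := hf 2 3 (by decide)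
  rw [h5', h4, h3] at h5
  rw [two_nsmul, ← sub_eq_zero, ← sub_eq_zero.mpr h5]
  abel

theorem map_add_one_of_map_add_of_ne (n : ℤ) : f (n + 1) = f n + f 1 := by
  rcases eq_or_ne n 1 with rfl | hn
  · simpa [two_nsmul] using map_two_of_map_add_of_ne hf
  · exact hf n 1 hn

theorem eq_zsmul_of_map_add_of_ne (n : ℤ) : f n = n • f 1 := by
  induction n using Int.induction_on with
  | zero => simpa using map_zero_of_map_add_of_ne hf
  | succ n ih => rw [map_add_one_of_map_add_of_ne hf, ih, add_zsmul, one_zsmul]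
  | pred n ih =>
    have h := map_add_one_of_map_add_of_ne hf (-n - 1)
    rw [sub_add_cancel, ih] at h
    rw [sub_zsmul, one_zsmul, h, add_neg_cancel_right]

end AddOnDistinct

/-- Coefficient form of the normalized degree-zero 1-cocycle condition for the Witt
algebra: if `(j - i)(ψ_{i+j} - ψ_i - ψ_j) = 0` for all `i, j` and `ψ_1 = 0`,
then `ψ = 0`. -/
theorem witt_one_cocycle_coefficients_vanish
    (K : Type*) [Field K] [CharZero K]
    (ψ : ℤ → K)
    (hcoc : ∀ i j : ℤ, ((j - i : ℤ) : K) * (ψ (i + j) - ψ i - ψ j) = 0)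
    (hnorm : ψ 1 = 0) :
    ∀ i : ℤ, ψ i = 0 := by
  have hadd : ∀ i j : ℤ, i ≠ j → ψ (i + j) = ψ i + ψ j := fun i j hij => by
    have hji : ((j - i : ℤ) : K) ≠ 0 := by exact_mod_cast sub_ne_zero.mpr hij.symm
    linear_combination (mul_eq_zero.mp (hcoc i j)).resolve_left hji
  intro i
  rw [eq_zsmul_of_map_add_of_ne hadd i, hnorm, smul_zero]
end

section
/- Let ψ be a degree-zero 3-cocycle of the Witt algebra with values in the adjoint module such that ψ_{i,j,1} = 0 for all i ≤ 0, j ∈ ℤ; ψ_{i,j,-1} = 0 for all i,j > 0; ψ_{i,-1,2} = 0 for all i ∈ ℤ; and ψ_{i,j,0} = 0 for all i,j ∈ ℤ. Then ψ_{i,j,1} = ψ_{i,j,-1} = 0 for all i, j ∈ ℤ. -/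
/-- The 3-cocycle condition for a degree-zero 3-cochain on the Witt algebra, in
coefficient form: `ψ(e_i,e_j,e_k) = ψ_{i,j,k} e_{i+j+k}`. -/
def IsWittCocycle3 {K : Type*} [Field K] (ψ : ℤ → ℤ → ℤ → K) : Prop :=
  ∀ i j k l : ℤ,
    ((j - i : ℤ) : K) * ψ (i + j) k l - ((k - i : ℤ) : K) * ψ (i + k) j l
      + ((l - i : ℤ) : K) * ψ (i + l) j k + ((k - j : ℤ) : K) * ψ (k + j) i l
      - ((l - j : ℤ) : K) * ψ (l + j) i k + ((l - k : ℤ) : K) * ψ (l + k) i j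
      - ((j + k + l - i : ℤ) : K) * ψ j k l + ((i + k + l - j : ℤ) : K) * ψ i k l
      - ((i + j + l - k : ℤ) : K) * ψ i j l + ((i + j + k - l : ℤ) : K) * ψ i j k = 0

/-!
Evaluating the cocycle condition at `(e_i, e_j, e_1, e_{-1})` links the two levels: for
`i, j > 0` it expresses `(i + j + 2) ψ_{i,j,1}` through level-one coefficients of smaller
index sum, so level one vanishes by induction on `i + j`. Once level one is gone, the same
identity becomes the recurrence
`(i - 1) ψ_{i+1,j,-1} + (j - 1) ψ_{i,j+1,-1} = (i + j - 2) ψ_{i,j,-1}`,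
which propagates `ψ_{i,2,-1} = 0` upwards in `j`, and then, once everything with a
nonnegative index is known to vanish, downwards in `i + j`.
-/

section Cochain

variable {K : Type*} [Field K] {ψ : ℤ → ℤ → ℤ → K}

lemma eq_zero_of_intCast_mul_eq_zero [CharZero K] {c : ℤ} (hc : c ≠ 0) {x : K}
    (h : (c : K) * x = 0) : x = 0 :=
  (mul_eq_zero.1 h).resolve_left (Int.cast_ne_zero.2 hc)

lemma eq_neg_swap_outer (halt1 : ∀ i j k : ℤ, ψ i j k = -ψ j i k)
    (halt2 : ∀ i j k : ℤ, ψ i j k = -ψ i k j) (i j k : ℤ) : ψ i j k = -ψ k j i := by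
  rw [halt1 i j k, halt2 j i k, halt1 j k i, neg_neg]

namespace IsWittCocycle3

lemma apply_one_neg_one (hcoc : IsWittCocycle3 ψ) (i j : ℤ) :
    ((i : K) + j + 2) * ψ i j 1 - ((i : K) + 1) * ψ (i - 1) j 1
      + ((j : K) + 1) * ψ (j - 1) i 1 - ((i : K) + j - 2) * ψ i j (-1)
      + ((i : K) - 1) * ψ (i + 1) j (-1) - ((j : K) - 1) * ψ (j + 1) i (-1)
      + ((j : K) - i) * (ψ (i + j) 1 (-1) - ψ j 1 (-1) - ψ i 1 (-1)) - 2 * ψ 0 i j = 0 := by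
  have h := hcoc i j 1 (-1)
  rw [show i + -1 = i - 1 by ring, show (1 : ℤ) + j = j + 1 by ring,
    show -1 + j = j - 1 by ring, show (-1 : ℤ) + 1 = 0 by norm_num] at h
  push_cast at h
  linear_combination h

lemma level_one_eq_zero_of_pos [CharZero K] (hcoc : IsWittCocycle3 ψ)
    (hz : ∀ j k : ℤ, ψ 0 j k = 0) (h1 : ∀ i j : ℤ, i ≤ 0 → ψ i j 1 = 0)
    (h2 : ∀ i j : ℤ, 0 < i → 0 < j → ψ i j (-1) = 0)
    {i j : ℤ} (hi : 0 < i) (hj : 0 < j) : ψ i j 1 = 0 := by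
  suffices h : ∀ n : ℕ, ∀ i j : ℤ, 0 < i → 0 < j → i + j ≤ n → ψ i j 1 = 0 from
    h (i + j).toNat i j hi hj (by omega)
  intro n
  induction n with
  | zero => intro i j hi hj hle; omega
  | succ n ih =>
    intro i j hi hj hle
    have lower : ∀ a b : ℤ, 0 < b → a + b ≤ n → ψ a b 1 = 0 := fun a b hb hab =>
      (le_or_gt a 0).elim (h1 a b) fun ha => ih a b ha hb hab
    have key := hcoc.apply_one_neg_one i j
    rw [lower (i - 1) j hj (by omega), lower (j - 1) i hi (by omega), h2 i j hi hj,
      h2 (i + 1) j (by omega) hj, h2 (j + 1) i (by omega) hi, h2 (i + j) 1 (by omega) one_pos,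
      h2 j 1 hj one_pos, h2 i 1 hi one_pos, hz] at key
    refine eq_zero_of_intCast_mul_eq_zero (show i + j + 2 ≠ 0 by omega) ?_
    push_cast
    linear_combination key

lemma level_neg_one_recurrence (hcoc : IsWittCocycle3 ψ)
    (halt1 : ∀ i j k : ℤ, ψ i j k = -ψ j i k) (halt2 : ∀ i j k : ℤ, ψ i j k = -ψ i k j)
    (hz : ∀ j k : ℤ, ψ 0 j k = 0) (hone : ∀ i j : ℤ, ψ i j 1 = 0) (i j : ℤ) :
    ((i : K) - 1) * ψ (i + 1) j (-1) + ((j : K) - 1) * ψ i (j + 1) (-1)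
      = ((i : K) + j - 2) * ψ i j (-1) := by
  have key := hcoc.apply_one_neg_one i j
  simp only [halt2 _ 1 (-1), hone, hz] at key
  rw [halt1 (j + 1) i] at key
  linear_combination key

end IsWittCocycle3

section Recurrence

variable [CharZero K] {f : ℤ → ℤ → K}

lemma eq_zero_of_recurrence_of_nonneg
    (hrec : ∀ i j : ℤ, ((i : K) - 1) * f (i + 1) j + ((j : K) - 1) * f i (j + 1)
      = ((i : K) + j - 2) * f i j)
    (h0 : ∀ i, f i 0 = 0) (h1 : ∀ i, f i 1 = 0) (h2 : ∀ i, f i 2 = 0)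
    (i : ℤ) {j : ℤ} (hj : 0 ≤ j) : f i j = 0 := by
  obtain rfl | rfl | hj2 : j = 0 ∨ j = 1 ∨ 2 ≤ j := by omega
  · exact h0 i
  · exact h1 i
  induction j, hj2 using Int.leInduction generalizing i with
  | base => exact h2 i
  | succ j hj ih =>
    have key := hrec i j
    rw [ih (i + 1) (by omega), ih i (by omega)] at key
    refine eq_zero_of_intCast_mul_eq_zero (show j - 1 ≠ 0 by omega) ?_
    push_cast
    linear_combination key

lemma eq_zero_of_recurrence (hanti : ∀ i j, f i j = -f j i)
    (hrec : ∀ i j : ℤ, ((i : K) - 1) * f (i + 1) j + ((j : K) - 1) * f i (j + 1)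
      = ((i : K) + j - 2) * f i j)
    (h0 : ∀ i, f i 0 = 0) (h1 : ∀ i, f i 1 = 0) (h2 : ∀ i, f i 2 = 0) (i j : ℤ) :
    f i j = 0 := by
  have nonneg : ∀ i j : ℤ, 0 ≤ i ∨ 0 ≤ j → f i j = 0 := by
    rintro i j (hi | hj)
    · rw [hanti, eq_zero_of_recurrence_of_nonneg hrec h0 h1 h2 j hi, neg_zero]
    · exact eq_zero_of_recurrence_of_nonneg hrec h0 h1 h2 i hj
  suffices h : ∀ s ≤ 0, ∀ i j : ℤ, s ≤ i + j → f i j = 0 from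
    h (min (i + j) 0) (min_le_right _ _) i j (min_le_left _ _)
  intro s hs
  induction s, hs using Int.leInductionDown with
  | base => exact fun i j hij => nonneg i j (by omega)
  | pred s hs ih =>
    intro i j hij
    obtain hij | hij : s ≤ i + j ∨ i + j = s - 1 := by omega
    · exact ih i j hij
    have key := hrec i j
    rw [ih (i + 1) j (by omega), ih i (j + 1) (by omega)] at key
    refine eq_zero_of_intCast_mul_eq_zero (show i + j - 2 ≠ 0 by omega) ?_
    push_cast
    linear_combination -key

end Recurrence

end Cochain

/-- Lemma 4.2.3: the levels plus one and minus one of a normalized degree-zero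
3-cocycle of the Witt algebra vanish entirely. -/
theorem witt_three_cocycle_level_pm_one_vanishes
    (K : Type*) [Field K] [CharZero K]
    (ψ : ℤ → ℤ → ℤ → K)
    (halt1 : ∀ i j k : ℤ, ψ i j k = -ψ j i k)
    (halt2 : ∀ i j k : ℤ, ψ i j k = -ψ i k j)
    (hcoc : IsWittCocycle3 ψ)
    (h1 : ∀ i j : ℤ, i ≤ 0 → ψ i j 1 = 0)
    (h2 : ∀ i j : ℤ, 0 < i → 0 < j → ψ i j (-1) = 0)
    (h3 : ∀ i : ℤ, ψ i (-1) 2 = 0)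
    (h0 : ∀ i j : ℤ, ψ i j 0 = 0) :
    ∀ i j : ℤ, ψ i j 1 = 0 ∧ ψ i j (-1) = 0 := by
  have hz : ∀ j k : ℤ, ψ 0 j k = 0 := fun j k => by
    rw [eq_neg_swap_outer halt1 halt2, h0, neg_zero]
  have hone : ∀ i j : ℤ, ψ i j 1 = 0 := by
    intro i j
    rcases le_or_gt i 0 with hi | hi
    · exact h1 i j hi
    rcases le_or_gt j 0 with hj | hj
    · rw [halt1, h1 j i hj, neg_zero]
    · exact hcoc.level_one_eq_zero_of_pos hz h1 h2 hi hj
  intro i j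
  refine ⟨hone i j, eq_zero_of_recurrence (fun i j => halt1 i j (-1))
    (hcoc.level_neg_one_recurrence halt1 halt2 hz hone) (fun i => ?_) (fun i => ?_)
    (fun i => ?_) i j⟩
  · rw [halt1, hz, neg_zero]
  · rw [halt2, hone, neg_zero]
  · rw [halt2, h3, neg_zero]
end

section
/- The Godbillon-Vey 3-cocycle GV is not a coboundary: GV(e_1, e_0, e_{-1}) ≠ 0, while (δ_2 φ)(e_1, e_0, e_{-1}) = 0 for every 2-cochain φ: Λ^2 W → K. Hence H^3(W, K) ≠ 0. -/
/-!
Since `[e₁,e₀] = -e₁`, `[e₀,e₋₁] = -e₋₁` and `[e₋₁,e₁] = 2e₀`, the coboundary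
`(δ₂φ)(e₁,e₀,e₋₁) = -φ(e₁,e₋₁) - φ(e₋₁,e₁) + 2φ(e₀,e₀)` vanishes by antisymmetry of `φ`
alone, whereas `GV(e₁,e₀,e₋₁) = -2` is nonzero in characteristic zero.
-/

/-- The algebraic Godbillon-Vey 3-cochain on the Witt algebra, in coefficient form. -/
def godbillonVey (K : Type*) [Field K] (n m k : ℤ) : K :=
  if n + m + k = 0 then (((m - n) * (2 * m + n) * (m + 2 * n) : ℤ) : K) else 0

/-- `δ₂φ` for a 2-cochain `φ` with trivial coefficients, in coefficient form:
`[e_n, e_m] = (m - n) e_{n+m}`. -/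
def wittCoboundary {R : Type*} [Ring R] (φ : ℤ → ℤ → R) (n m k : ℤ) : R :=
  ((m - n : ℤ) : R) * φ (n + m) k + ((k - m : ℤ) : R) * φ (m + k) n
    + ((n - k : ℤ) : R) * φ (k + n) m

theorem wittCoboundary_one_zero_neg_one {R : Type*} [CommRing R] (φ : ℤ → ℤ → R)
    (hφ : ∀ i j : ℤ, φ i j = -φ j i) : wittCoboundary φ 1 0 (-1) = 0 := by
  simp only [wittCoboundary]
  push_cast
  linear_combination -hφ 1 (-1) + hφ 0 0

theorem godbillonVey_one_zero_neg_one (K : Type*) [Field K] :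
    godbillonVey K 1 0 (-1) = -2 := by
  norm_num [godbillonVey]

/-- The Godbillon-Vey 3-cocycle is not a coboundary: it is nonzero on `(e₁, e₀, e₋₁)`
while every coboundary `δ₂φ` of a 2-cochain `φ` vanishes there; hence `H³(W,K) ≠ 0`. -/
theorem godbillonVey_not_coboundary (K : Type*) [Field K] [CharZero K] :
    godbillonVey K 1 0 (-1) ≠ 0 ∧
    ∀ φ : ℤ → ℤ → K, (∀ i j : ℤ, φ i j = -φ j i) →
      -- `(δ₂φ)(e₁,e₀,e₋₁) = φ([e₁,e₀],e₋₁) + φ([e₀,e₋₁],e₁) + φ([e₋₁,e₁],e₀)`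
      ((0 - 1 : ℤ) : K) * φ 1 (-1) + ((-1 - 0 : ℤ) : K) * φ (-1) 1
        + ((1 - (-1) : ℤ) : K) * φ 0 0 = 0 := by
  refine ⟨by norm_num [godbillonVey_one_zero_neg_one], fun φ hφ => ?_⟩
  simpa [wittCoboundary] using wittCoboundary_one_zero_neg_one φ hφ
end
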